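/- For every n ≥ 4 and every λ_1 with 2 ≤ λ_1 ≤ n−2, the near-hook partition (λ_1, 2, 1^{n−λ_1−2}) satisfies η_{(λ_1,2,1^{n−λ_1−2})} = (n−1)·((−1)^{n−1} + (−1)^{n+λ_1}·λ_1·D_{λ_1−2}); equivalently, (λ_1−1)·η_{(λ_1,2,1^{n−λ_1−2})} = (−1)^{n+λ_1}·(n−1)·D_{λ_1}. -/

import Mathlib

/-! One step of the recurrence takes the near hook `(a, 2, 1^k)` to `λ-ĥ = (1)`, with
`η_{(1)} = D₁ = 0`, and to `λ-ĉ = (a - 1, 1)`. One more step expresses the two-row hook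
through the one-row eigenvalues, and `η_{(m)} = D_m` because for a single row Renteln's
recurrence is the derangement recurrence. The second formula then follows from
`D_{m+2} = (m+1)((m+2) D_m - (-1)^m)`. -/

/-- Derangement numbers: `D 0 = 1`, `D (m+1) = (m+1) * D m + (-1)^(m+1)`. -/
def derange : ℕ → ℤ
  | 0 => 1
  | n + 1 => (n + 1 : ℤ) * derange n + (-1) ^ (n + 1)

/-- Subtract one from every part and discard the parts that become zero
(deleting the first column of the Ferrers diagram). -/
def strip (l : List ℕ) : List ℕ := (l.map (· - 1)).filter (fun x => 0 < x)

lemma strip_measure (l : List ℕ) : (strip l).sum + (strip l).length ≤ l.sum := by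
  induction l with
  | nil => simp [strip]
  | cons x t ih =>
      simp only [strip, List.map_cons, List.filter_cons] at ih ⊢
      by_cases hx : 0 < x - 1 <;> simp [hx] <;> omega

/-- The eigenvalues of the derangement graph, defined by Renteln's recurrence:
`η ∅ = 1` and `η λ = (-1)^h (η (λ-ĥ) + (-1)^{λ₁} h η (λ-ĉ))`, where
`h = λ₁ + r - 1` is the hook size, `λ-ĥ = strip (tail λ)` removes the hook,
and `λ-ĉ = strip λ` removes the first column. -/
def eta : List ℕ → ℤ
  | [] => 1
  | a :: t =>
      (-1) ^ (a + t.length) *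
        (eta (strip t) + (-1) ^ a * ((a : ℤ) + t.length) * eta (strip (a :: t)))
  termination_by l => l.sum + l.length
  decreasing_by
  · have h1 := strip_measure t
    simp only [List.sum_cons, List.length_cons]
    omega
  · have h1 := strip_measure (a :: t)
    simp only [List.sum_cons, List.length_cons] at h1 ⊢
    omega

/-- `l` is (the list of parts of) a partition of `n`: weakly decreasing,
all parts positive, summing to `n`. -/
def IsPartition (n : ℕ) (l : List ℕ) : Prop :=
  l.Pairwise (· ≥ ·) ∧ (∀ x ∈ l, 0 < x) ∧ l.sum = n

/-- The hook partition `(a, 1^(n-a))` of `n`. -/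
def hookP (n a : ℕ) : List ℕ := a :: List.replicate (n - a) 1

lemma neg_one_pow_sq {R : Type*} [Monoid R] [HasDistribNeg R] (m : ℕ) :
    ((-1 : R) ^ m) ^ 2 = 1 := by
  simp [← pow_mul]

lemma eta_nil : eta [] = 1 := by
  rw [eta]

lemma eta_cons (a : ℕ) (t : List ℕ) : eta (a :: t) =
    (-1) ^ (a + t.length) *
      (eta (strip t) + (-1) ^ a * ((a : ℤ) + t.length) * eta (strip (a :: t))) := by
  rw [eta]

lemma eta_strip_singleton_succ (m : ℕ) : eta (strip [m + 1]) = eta [m] := by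
  cases m with
  | zero => simp [strip, eta_cons, eta_nil]
  | succ m => simp [strip]

lemma eta_singleton (m : ℕ) : eta [m] = derange m := by
  induction m with
  | zero => simp [eta_cons, eta_nil, strip, derange]
  | succ m ih =>
    rw [eta_cons, eta_strip_singleton_succ, ih, derange]
    simp only [strip, List.map_nil, List.filter_nil, eta_nil, List.length_nil]
    push_cast
    linear_combination ((m : ℤ) + 1) * derange m * neg_one_pow_sq (R := ℤ) (m + 1)

lemma eta_two_row_hook (c : ℕ) : eta [c + 1, 1] = (-1) ^ c - ((c : ℤ) + 2) * derange c := by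
  have hhook : strip [1] = [] := rfl
  have hcolumn : strip [c + 1, 1] = strip [c + 1] := by simp [strip, List.filter_cons]
  rw [eta_cons, hhook, hcolumn, eta_strip_singleton_succ c, eta_singleton, eta_nil]
  simp only [List.length_singleton]
  push_cast
  linear_combination -((c : ℤ) + 2) * derange c * neg_one_pow_sq (R := ℤ) c

lemma derange_add_two (m : ℕ) :
    derange (m + 2) = ((m : ℤ) + 1) * (((m : ℤ) + 2) * derange m - (-1) ^ m) := by
  rw [derange, derange]
  push_cast
  ring

lemma eta_near_hook (a k : ℕ) (ha : 2 ≤ a) :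
    eta (a :: 2 :: List.replicate k 1) =
      ((a : ℤ) + k + 1) * ((-1) ^ (a + k + 1) + (-1) ^ k * (a : ℤ) * derange (a - 2)) := by
  obtain ⟨b, rfl⟩ : ∃ b, a = b + 2 := ⟨a - 2, by omega⟩
  have hhook : strip (2 :: List.replicate k 1) = [1] := by simp [strip]
  have hcolumn : strip ((b + 2) :: 2 :: List.replicate k 1) = [b + 1, 1] := by simp [strip]
  rw [eta_cons, hhook, hcolumn, eta_singleton 1, show derange 1 = 0 from rfl, eta_two_row_hook,
    Nat.add_sub_cancel]
  simp only [List.length_cons, List.length_replicate]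
  push_cast
  linear_combination -(-1) ^ k * ((b : ℤ) + k + 3) * ((-1) ^ b - ((b : ℤ) + 2) * derange b) *
    neg_one_pow_sq (R := ℤ) b

theorem eta_nearhook_formula_general (n a : ℕ) (ha : 2 ≤ a) (han : a ≤ n - 2) :
    eta (a :: 2 :: List.replicate (n - a - 2) 1) =
      ((n : ℤ) - 1) * ((-1) ^ (n - 1) + (-1) ^ (n + a) * (a : ℤ) * derange (a - 2)) ∧
    ((a : ℤ) - 1) * eta (a :: 2 :: List.replicate (n - a - 2) 1) =
      (-1) ^ (n + a) * ((n : ℤ) - 1) * derange a := by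
  obtain ⟨k, rfl⟩ : ∃ k, n = a + k + 2 := ⟨n - a - 2, by omega⟩
  obtain ⟨b, rfl⟩ : ∃ b, a = b + 2 := ⟨a - 2, by omega⟩
  have hk : b + 2 + k + 2 - (b + 2) - 2 = k := by omega
  have hsign : (-1 : ℤ) ^ (b + 2 + k + 2 + (b + 2)) = (-1) ^ k := by
    rw [show b + 2 + k + 2 + (b + 2) = k + 2 * (b + 3) by ring, pow_add, pow_mul, neg_one_sq,
      one_pow, mul_one]
  rw [hk, hsign, Nat.add_sub_cancel, show b + 2 + k + 2 - 1 = b + 2 + k + 1 by omega,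
    eta_near_hook (b + 2) k ha, derange_add_two]
  push_cast
  constructor <;> ring

/-- Near-hook eigenvalues: for `n ≥ 4` and `2 ≤ a ≤ n-2`,
`η_{(a,2,1^{n-a-2})} = (n-1)((-1)^{n-1} + (-1)^{n+a} a D_{a-2})`; equivalently
`(a-1) η_{(a,2,1^{n-a-2})} = (-1)^{n+a} (n-1) D_a`. -/
theorem eta_nearhook_formula (n a : ℕ) (hn : 4 ≤ n) (ha : 2 ≤ a) (han : a ≤ n - 2) :
    eta (a :: 2 :: List.replicate (n - a - 2) 1) =
      ((n : ℤ) - 1) * ((-1) ^ (n - 1) + (-1) ^ (n + a) * (a : ℤ) * derange (a - 2)) ∧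
    ((a : ℤ) - 1) * eta (a :: 2 :: List.replicate (n - a - 2) 1) =
      (-1) ^ (n + a) * ((n : ℤ) - 1) * derange a :=
  eta_nearhook_formula_general n a ha han
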